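/- For every k ≥ 5, the directed circuit Ck has a graceful difference labeling in which exactly one arc has magnitude 1 (i.e., exactly one arc uv satisfies |f(v)-f(u)| = 1). -/

import Mathlib

/-!
The zigzag labeling `1, k, 2, k-1, 3, …` of `C_k` gives the path arcs the labels
`k-1, -(k-2), k-3, …, ±1`, with alternating signs and pairwise distinct magnitudes; the closing
arc gets `-⌊k/2⌋`, which repeats no path label exactly when `k ≡ 1, 2 (mod 4)`.
For `k ≡ 0, 3 (mod 4)` use instead `1, k`, then the zigzag of `{3, …, k-2}`, then `2, k-1`:
the arc labels are `k-1, -(k-3)`, the alternating labels `±(k-5), …, ±1` of the inner zigzag,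
`-⌊(k-2)/2⌋`, `k-3` and `-(k-2)`, again pairwise distinct.
In both cases the only arc of magnitude `1` is the last arc of the (inner) zigzag path.
-/

/-- Cyclic successor on `Fin k`. -/
def cyc (k : ℕ) (hk : 0 < k) (i : Fin k) : Fin k := ⟨(i.val + 1) % k, Nat.mod_lt _ hk⟩

/-- `f` is a graceful difference labeling of the digraph with arc set `A`:
`f` is a bijection from the vertices onto `{1,…,|V|}` and the arc labels
`f v - f u` are pairwise distinct. -/
def IsGdlOn {V : Type} [Fintype V] (A : Set (V × V)) (f : V → ℤ) : Prop :=
  Set.BijOn f Set.univ (Set.Icc 1 (Fintype.card V : ℤ)) ∧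
  Set.InjOn (fun a : V × V => f a.2 - f a.1) A

/-- Arc set of the directed circuit on `Fin k`. -/
def circuitArcs (k : ℕ) (hk : 0 < k) : Set (Fin k × Fin k) :=
  Set.range (fun i => (i, cyc k hk i))

theorem bijOn_univ_Icc_of_injective {V : Type*} [Fintype V] {f : V → ℤ}
    (hf : Function.Injective f) (hmaps : ∀ v, f v ∈ Set.Icc 1 (Fintype.card V : ℤ)) :
    Set.BijOn f Set.univ (Set.Icc 1 (Fintype.card V : ℤ)) := by
  refine ⟨fun v _ => hmaps v, hf.injOn, ?_⟩
  simpa using Finset.surjOn_of_injOn_of_card_le (s := Finset.univ)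
    (t := Finset.Icc 1 (Fintype.card V : ℤ)) f (fun v _ => by simpa using hmaps v) hf.injOn
    (by simp)

theorem injOn_circuitArcs_of_injective {k : ℕ} (hk : 0 < k) {f : Fin k → ℤ}
    (hf : Function.Injective fun i => f (cyc k hk i) - f i) :
    Set.InjOn (fun a : Fin k × Fin k => f a.2 - f a.1) (circuitArcs k hk) := by
  rintro _ ⟨i, rfl⟩ _ ⟨j, rfl⟩ h
  rw [hf h]

/-- Vertex `v_{i+1}` of `C_k` is the index `i < k`, and a labeling is given by `F : ℕ → ℤ`
on these indices; this is the label of the arc leaving `v_{i+1}`. -/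
def arcLabel (k : ℕ) (F : ℕ → ℤ) (i : ℕ) : ℤ := F ((i + 1) % k) - F i

theorem arcLabel_eq {k i : ℕ} (F : ℕ → ℤ) (hi : i < k) :
    arcLabel k F i = if i + 1 = k then F 0 - F i else F (i + 1) - F i := by
  unfold arcLabel
  split_ifs with h
  · rw [h, Nat.mod_self]
  · rw [Nat.mod_eq_of_lt (by omega)]

theorem exists_gdl_of_labeling {k : ℕ} (hk : 0 < k) (F : ℕ → ℤ)
    (hmem : ∀ i < k, F i ∈ Set.Icc 1 (k : ℤ)) (hinj : Set.InjOn F (Set.Iio k))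
    (harc : Set.InjOn (arcLabel k F) (Set.Iio k)) {w : ℕ} (hw : w < k)
    (hone : ∀ i < k, |arcLabel k F i| = 1 ↔ i = w) :
    ∃ f : Fin k → ℤ, IsGdlOn (circuitArcs k hk) f ∧
      ∃! i : Fin k, |f (cyc k hk i) - f i| = 1 := by
  refine ⟨fun i => F i, ⟨?_, injOn_circuitArcs_of_injective (f := fun i => F i) hk ?_⟩,
    ⟨w, hw⟩, ?_, ?_⟩
  · refine bijOn_univ_Icc_of_injective (fun i j h => Fin.ext (hinj i.2 j.2 h)) fun i => ?_
    simpa using hmem i i.2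
  · exact fun i j h => Fin.ext (harc i.2 j.2 h)
  · exact (hone w hw).2 rfl
  · exact fun i hi => Fin.ext ((hone i i.2).1 hi)

def zigzag (k i : ℕ) : ℤ := if i % 2 = 0 then i / 2 + 1 else k - i / 2

theorem zigzag_mem_Icc {k i : ℕ} (hi : i < k) : zigzag k i ∈ Set.Icc 1 (k : ℤ) := by
  unfold zigzag; constructor <;> split_ifs <;> omega

theorem zigzag_injOn (k : ℕ) : Set.InjOn (zigzag k) (Set.Iio k) := by
  intro i hi j hj h
  simp only [Set.mem_Iio] at hi hj
  unfold zigzag at h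
  split_ifs at h <;> omega

theorem arcLabel_zigzag {k i : ℕ} (hi : i < k) :
    arcLabel k (zigzag k) i =
      if i + 1 = k then -(k / 2 : ℤ) else if i % 2 = 0 then k - 1 - i else i + 1 - k := by
  rw [arcLabel_eq _ hi]
  unfold zigzag
  split_ifs <;> omega

theorem arcLabel_zigzag_injOn {k : ℕ} (hk : k % 4 = 1 ∨ k % 4 = 2) :
    Set.InjOn (arcLabel k (zigzag k)) (Set.Iio k) := by
  intro i hi j hj h
  simp only [Set.mem_Iio] at hi hj
  rw [arcLabel_zigzag hi, arcLabel_zigzag hj] at h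
  split_ifs at h <;> omega

theorem abs_arcLabel_zigzag_eq_one_iff {k i : ℕ} (hk : 5 ≤ k) (hi : i < k) :
    |arcLabel k (zigzag k) i| = 1 ↔ i = k - 2 := by
  rw [arcLabel_zigzag hi, abs_eq zero_le_one]
  split_ifs <;> omega

def twistedZigzag (k i : ℕ) : ℤ :=
  if i = 0 then 1 else if i = 1 then k else if i = k - 2 then 2 else if i = k - 1 then k - 1
  else zigzag (k - 4) (i - 2) + 2

theorem twistedZigzag_mem_Icc {k i : ℕ} (hk : 5 ≤ k) (hi : i < k) :
    twistedZigzag k i ∈ Set.Icc 1 (k : ℤ) := by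
  unfold twistedZigzag zigzag; constructor <;> split_ifs <;> omega

theorem twistedZigzag_injOn {k : ℕ} (hk : 5 ≤ k) : Set.InjOn (twistedZigzag k) (Set.Iio k) := by
  intro i hi j hj h
  simp only [Set.mem_Iio] at hi hj
  unfold twistedZigzag zigzag at h
  split_ifs at h <;> omega

set_option maxHeartbeats 400000 in
theorem arcLabel_twistedZigzag {k i : ℕ} (hk : 5 ≤ k) (hi : i < k) :
    arcLabel k (twistedZigzag k) i =
      if i + 1 = k then (2 - k : ℤ) else if i = 0 then k - 1 else if i = 1 then 3 - k
      else if i + 2 = k then k - 3 else if i + 3 = k then -(((k : ℤ) - 2) / 2)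
      else if i % 2 = 0 then k - 3 - i else i + 3 - k := by
  rw [arcLabel_eq _ hi]
  simp only [twistedZigzag, zigzag, ↓reduceIte, Nat.add_one_ne_zero]
  split_ifs <;> omega

theorem arcLabel_twistedZigzag_injOn {k : ℕ} (hk : 5 ≤ k) (hk4 : k % 4 = 0 ∨ k % 4 = 3) :
    Set.InjOn (arcLabel k (twistedZigzag k)) (Set.Iio k) := by
  intro i hi j hj h
  simp only [Set.mem_Iio] at hi hj
  rw [arcLabel_twistedZigzag hk hi, arcLabel_twistedZigzag hk hj] at h
  split_ifs at h <;> omega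

theorem abs_arcLabel_twistedZigzag_eq_one_iff {k i : ℕ} (hk : 7 ≤ k) (hi : i < k) :
    |arcLabel k (twistedZigzag k) i| = 1 ↔ i = k - 4 := by
  rw [arcLabel_twistedZigzag (by omega) hi, abs_eq zero_le_one]
  split_ifs <;> omega

/-- For every `k ≥ 5`, the circuit `C_k` has a gdl with exactly one arc of magnitude 1. -/
theorem stmt_5 (k : ℕ) (hk : 5 ≤ k) :
    ∃ f : Fin k → ℤ, IsGdlOn (circuitArcs k (by omega)) f ∧
      ∃! i : Fin k, |f (cyc k (by omega) i) - f i| = 1 := by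
  rcases (by omega : (k % 4 = 1 ∨ k % 4 = 2) ∨ (k % 4 = 0 ∨ k % 4 = 3)) with hk4 | hk4
  · exact exists_gdl_of_labeling _ (zigzag k) (fun i hi => zigzag_mem_Icc hi)
      (zigzag_injOn k) (arcLabel_zigzag_injOn hk4) (w := k - 2) (by omega)
      fun i hi => abs_arcLabel_zigzag_eq_one_iff hk hi
  · exact exists_gdl_of_labeling _ (twistedZigzag k) (fun i hi => twistedZigzag_mem_Icc hk hi)
      (twistedZigzag_injOn hk) (arcLabel_twistedZigzag_injOn hk hk4) (w := k - 4) (by omega)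
      fun i hi => abs_arcLabel_twistedZigzag_eq_one_iff (by omega) hi
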